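/- Extension to all countable structures: let M be the Fraïssé limit of a finite relational vocabulary L_Ext (every countable L_Ext-structure embeds into M, and M is ultrahomogeneous). Then every exchangeable L_Int-distribution P_M over M extends uniquely to a projective family of distributions on all countable L_Ext-structures: there is a unique assignment D ↦ P_D of probability measures on the local σ-algebra of L_Int-expansions of D (for each countable L_Ext-structure D) such that P_M is the given distribution and for every embedding ι : D' ↪ D between countable L_Ext-structures and every L_Int-expansion X of a finite substructure of D', P_{D'}(D'_X) = P_D(D_{ι(X)}). The extension is given by P_D(D_X) := P_M(M_{f(X)}) for any embedding f : D ↪ M, well-defined by ultrahomogeneity. -/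

import Mathlib

open MeasureTheory

/-- An `L`-structure on domain `D`: an interpretation of each relation symbol `R`
(of arity `ar R`) as a set of `ar R`-tuples from `D`. -/
def Struc (L : Type) (ar : L → ℕ) (D : Type) : Type :=
  ∀ R : L, (Fin (ar R) → D) → Prop

/-- `ω` (a structure on `D`) extends the image of `X` (a structure on `D'`) along the
injection `ι`; equivalently, `ι` is an embedding of structures from `X` to `ω`. -/
def ExtendsAlong {L : Type} {ar : L → ℕ} {D' D : Type} (ι : D' ↪ D)
    (X : Struc L ar D') (ω : Struc L ar D) : Prop :=
  ∀ (R : L) (s : Fin (ar R) → D'), ω R (fun i => ι (s i)) ↔ X R s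

/-- Transport of a structure along a bijection. -/
def Struc.map {L : Type} {ar : L → ℕ} {D D' : Type} (e : D ≃ D')
    (X : Struc L ar D) : Struc L ar D' :=
  fun R t => X R (fun i => e.symm (t i))

/-- The reduct of a structure to a subvocabulary `E`. -/
def reduct {L : Type} {ar : L → ℕ} (E : Set L) {D : Type} (X : Struc L ar D) :
    Struc ↥E (fun R => ar ↑R) D :=
  fun R t => X ↑R t

/-- A family of distributions indexed by all finite sets is projective if marginals
are invariant under injections. -/
def Projective {L : Type} {ar : L → ℕ}
    (P : ∀ (D : Type) [Fintype D], PMF (Struc L ar D)) : Prop :=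
  ∀ (D' D : Type) [Fintype D'] [Fintype D] (ι : D' ↪ D) (X : Struc L ar D'),
    P D' X = (P D).toOuterMeasure {ω | ExtendsAlong ι X ω}

/-- A structured (`S`-input, `T`-output) family of distributions is projective if
marginals are invariant under embeddings of input structures. -/
def ProjFam {S T : Type} {arS : S → ℕ} {arT : T → ℕ}
    (P : ∀ (D : Type) [Fintype D], Struc S arS D → PMF (Struc T arT D)) : Prop :=
  ∀ (D' D : Type) [Fintype D'] [Fintype D] (ι : D' ↪ D)
    (A' : Struc S arS D') (A : Struc S arS D), ExtendsAlong ι A' A →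
    ∀ X : Struc T arT D',
      P D' A' X = (P D A).toOuterMeasure {ω | ExtendsAlong ι X ω}

/-- The space of `L_Int`-expansions of an `L_Ext`-structure `A` on a domain `D`. -/
def ExpSpaceD (L : Type) (ar : L → ℕ) (E : Set L) (D : Type)
    (A : Struc ↥E (fun R => ar ↑R) D) : Type :=
  {ω : Struc L ar D // reduct E ω = A}

/-- The cylinder subset of expansions of `A` extending the finite structure `X`
along `ι`. -/
def CylD {L : Type} {ar : L → ℕ} {E : Set L} {D : Type}
    (A : Struc ↥E (fun R => ar ↑R) D) {n : ℕ} (ι : Fin n ↪ D)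
    (X : Struc L ar (Fin n)) : Set (ExpSpaceD L ar E D A) :=
  {ω | ExtendsAlong ι X ω.1}

/-- The local σ-algebra on the expansions of `A`, generated by the cylinder sets. -/
instance expMSD (L : Type) (ar : L → ℕ) (E : Set L) (D : Type)
    (A : Struc ↥E (fun R => ar ↑R) D) : MeasurableSpace (ExpSpaceD L ar E D A) :=
  MeasurableSpace.generateFrom
    {S | ∃ (n : ℕ) (ι : Fin n ↪ D) (X : Struc L ar (Fin n)), S = CylD A ι X}

/-- `e` is an automorphism of the `L_Ext`-structure `M` on `ℕ`. -/
def IsAutOf {L : Type} {ar : L → ℕ} {E : Set L}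
    (M : Struc ↥E (fun R => ar ↑R) ℕ) (e : ℕ ≃ ℕ) : Prop :=
  ∀ (R : ↥E) (t : Fin (ar ↑R) → ℕ), M R (fun i => e (t i)) ↔ M R t

/-!
Every countable `L_Ext`-structure `D` embeds into `M` by universality; fix such an embedding
`ι_D` and let `P_D` be the image of `P_M` under restriction of expansions along `ι_D`. Two
embeddings of a finite structure into `M` differ by an automorphism of `M` (ultrahomogeneity),
so by exchangeability `P_M` gives the same mass to the cylinders they define. Hence the
cylinder probabilities of `P_D` do not depend on `ι_D`, which gives projectivity, and any
projective family must agree with `P_D` on cylinders, which form, up to finite unions, a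
π-system generating the local σ-algebra; this gives uniqueness.
-/

variable {L : Type} {ar : L → ℕ} {E : Set L}

def Struc.comap {D' D : Type} (f : D' → D) (ω : Struc L ar D) : Struc L ar D' :=
  fun R s => ω R (fun i => f (s i))

theorem extendsAlong_iff_comap_eq {D' D : Type} {ι : D' ↪ D} {X : Struc L ar D'}
    {ω : Struc L ar D} : ExtendsAlong ι X ω ↔ ω.comap ι = X :=
  ⟨fun h => funext fun R => funext fun s => propext (h R s), fun h _ _ => h ▸ Iff.rfl⟩

theorem ExtendsAlong.comap_trans {D' D : Type} {ι : D' ↪ D} {X : Struc L ar D'}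
    {ω : Struc L ar D} (h : ExtendsAlong ι X ω) {n : ℕ} (j : Fin n ↪ D') :
    ω.comap (j.trans ι) = X.comap j := by
  rw [← extendsAlong_iff_comap_eq.mp h]
  rfl

theorem exists_fin_embedding_factoring {D : Type} {n m : ℕ} (ι : Fin n ↪ D)
    (κ : Fin m ↪ D) :
    ∃ (k : ℕ) (θ : Fin k ↪ D) (u : Fin n → Fin k) (v : Fin m → Fin k),
      (∀ i, θ (u i) = ι i) ∧ (∀ i, θ (v i) = κ i) := by
  classical
  let s : Finset D := Finset.univ.map ι ∪ Finset.univ.map κ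
  refine ⟨_, s.equivFin.symm.toEmbedding.trans (Function.Embedding.subtype _),
    fun i => s.equivFin ⟨ι i, by simp [s]⟩, fun i => s.equivFin ⟨κ i, by simp [s]⟩,
    fun i => by simp, fun i => by simp⟩

instance Struc.finite [Finite L] {D : Type} [Finite D] : Finite (Struc L ar D) := by
  unfold Struc
  infer_instance

section Cylinders

variable {D : Type} (A : Struc ↥E (fun R => ar ↑R) D)

theorem cylD_eq_preimage {n : ℕ} (ι : Fin n ↪ D) (X : Struc L ar (Fin n)) :
    CylD A ι X = (fun ω : ExpSpaceD L ar E D A => ω.1.comap ι) ⁻¹' {X} := by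
  ext ω
  exact extendsAlong_iff_comap_eq

theorem measurableSet_cylD {n : ℕ} (ι : Fin n ↪ D) (X : Struc L ar (Fin n)) :
    MeasurableSet (CylD A ι X) :=
  MeasurableSpace.measurableSet_generateFrom ⟨n, ι, X, rfl⟩

def finiteCylinders : Set (Set (ExpSpaceD L ar E D A)) :=
  {S | ∃ (n : ℕ) (ι : Fin n ↪ D) (𝒮 : Set (Struc L ar (Fin n))),
    S = (fun ω : ExpSpaceD L ar E D A => ω.1.comap ι) ⁻¹' 𝒮}

theorem isPiSystem_finiteCylinders : IsPiSystem (finiteCylinders A) := by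
  rintro _ ⟨n, ι, 𝒮, rfl⟩ _ ⟨m, κ, 𝒯, rfl⟩ -
  obtain ⟨k, θ, u, v, hu, hv⟩ := exists_fin_embedding_factoring ι κ
  have hι : ι = fun i => θ (u i) := funext fun i => (hu i).symm
  have hκ : κ = fun i => θ (v i) := funext fun i => (hv i).symm
  refine ⟨k, θ, Struc.comap u ⁻¹' 𝒮 ∩ Struc.comap v ⁻¹' 𝒯, ?_⟩
  ext ω
  simp only [Set.mem_inter_iff, Set.mem_preimage, hι, hκ]
  exact Iff.rfl

theorem preimage_comap_eq_iUnion_cylD {n : ℕ} (ι : Fin n ↪ D)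
    (𝒮 : Set (Struc L ar (Fin n))) :
    (fun ω : ExpSpaceD L ar E D A => ω.1.comap ι) ⁻¹' 𝒮 = ⋃ X : 𝒮, CylD A ι X := by
  ext ω
  simp only [Set.mem_preimage, Set.mem_iUnion, cylD_eq_preimage, Set.mem_singleton_iff]
  exact ⟨fun h => ⟨⟨_, h⟩, rfl⟩, fun ⟨X, hX⟩ => hX ▸ X.2⟩

theorem pairwise_disjoint_cylD {n : ℕ} (ι : Fin n ↪ D) (𝒮 : Set (Struc L ar (Fin n))) :
    Pairwise (Function.onFun Disjoint fun X : 𝒮 => CylD A ι X) := by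
  intro X Y hXY
  simp only [Function.onFun, cylD_eq_preimage]
  exact Disjoint.preimage _ (Set.disjoint_singleton.mpr (Subtype.coe_injective.ne hXY))

theorem generateFrom_finiteCylinders [Finite L] :
    expMSD L ar E D A = MeasurableSpace.generateFrom (finiteCylinders A) := by
  apply le_antisymm
  · refine MeasurableSpace.generateFrom_le ?_
    rintro _ ⟨n, ι, X, rfl⟩
    exact MeasurableSpace.measurableSet_generateFrom ⟨n, ι, {X}, cylD_eq_preimage A ι X⟩
  · refine MeasurableSpace.generateFrom_le ?_
    rintro _ ⟨n, ι, 𝒮, rfl⟩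
    rw [preimage_comap_eq_iUnion_cylD]
    exact .iUnion fun X => measurableSet_cylD A ι X

theorem measure_ext_of_cylD [Finite L] {μ ν : Measure (ExpSpaceD L ar E D A)}
    [IsProbabilityMeasure μ] [IsProbabilityMeasure ν]
    (h : ∀ (n : ℕ) (ι : Fin n ↪ D) (X : Struc L ar (Fin n)),
      μ (CylD A ι X) = ν (CylD A ι X)) : μ = ν := by
  refine ext_of_generate_finite _ (generateFrom_finiteCylinders A)
    (isPiSystem_finiteCylinders A) ?_ (by simp)
  rintro _ ⟨n, ι, 𝒮, rfl⟩
  simp only [preimage_comap_eq_iUnion_cylD, measure_iUnion (pairwise_disjoint_cylD A ι 𝒮)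
    fun X => measurableSet_cylD A ι X, h]

end Cylinders

section Restriction

variable {D' D : Type} {ι : D' ↪ D} {A' : Struc ↥E (fun R => ar ↑R) D'}
  {A : Struc ↥E (fun R => ar ↑R) D}

def ExpSpaceD.restrict (h : ExtendsAlong ι A' A) (ω : ExpSpaceD L ar E D A) :
    ExpSpaceD L ar E D' A' :=
  ⟨ω.1.comap ι, by
    rw [← extendsAlong_iff_comap_eq.mp h]
    exact congrArg (Struc.comap ι) ω.2⟩

theorem ExpSpaceD.restrict_preimage_cylD (h : ExtendsAlong ι A' A) {n : ℕ} (j : Fin n ↪ D')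
    (X : Struc L ar (Fin n)) :
    ExpSpaceD.restrict h ⁻¹' CylD A' j X = CylD A (j.trans ι) X :=
  rfl

theorem ExpSpaceD.measurable_restrict (h : ExtendsAlong ι A' A) :
    Measurable (ExpSpaceD.restrict (L := L) h) := by
  refine measurable_generateFrom ?_
  rintro _ ⟨n, j, X, rfl⟩
  exact measurableSet_cylD A (j.trans ι) X

theorem ExpSpaceD.map_restrict_cylD (μ : Measure (ExpSpaceD L ar E D A))
    (h : ExtendsAlong ι A' A) {n : ℕ} (j : Fin n ↪ D') (X : Struc L ar (Fin n)) :
    μ.map (ExpSpaceD.restrict h) (CylD A' j X) = μ (CylD A (j.trans ι) X) := by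
  rw [Measure.map_apply (measurable_restrict h) (measurableSet_cylD A' j X),
    restrict_preimage_cylD]

end Restriction

theorem measure_cylD_eq_of_comap_eq {M : Struc ↥E (fun R => ar ↑R) ℕ}
    (hHom : ∀ (D : Type) [Fintype D] (A : Struc ↥E (fun R => ar ↑R) D)
      (f g : D ↪ ℕ), ExtendsAlong f A M → ExtendsAlong g A M →
      ∃ e : ℕ ≃ ℕ, IsAutOf M e ∧ ∀ d : D, e (f d) = g d)
    {μ : Measure (ExpSpaceD L ar E ℕ M)}
    (hExch : ∀ e : ℕ ≃ ℕ, IsAutOf M e →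
      ∀ (n : ℕ) (ι : Fin n ↪ ℕ) (X : Struc L ar (Fin n)),
        μ (CylD M ι X) = μ (CylD M (ι.trans e.toEmbedding) X))
    {n : ℕ} {j j' : Fin n ↪ ℕ} (hjj' : M.comap j = M.comap j') (X : Struc L ar (Fin n)) :
    μ (CylD M j X) = μ (CylD M j' X) := by
  obtain ⟨e, he, hej⟩ := hHom (Fin n) (M.comap j) j j'
    (extendsAlong_iff_comap_eq.mpr rfl) (extendsAlong_iff_comap_eq.mpr hjj'.symm)
  rw [hExch e he n j X]
  congr
  exact Function.Embedding.ext hej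

/-- an exchangeable distribution over the Fraïssé limit `M` of `L_Ext`
(universal for countable structures and ultrahomogeneous) extends uniquely to a
projective family of distributions on all countable `L_Ext`-structures. -/
theorem stmt13 {L : Type} [Fintype L] (ar : L → ℕ) (E : Set L)
    (M : Struc ↥E (fun R => ar ↑R) ℕ)
    (hUniv : ∀ (D : Type) [Countable D] (A : Struc ↥E (fun R => ar ↑R) D),
      ∃ ι : D ↪ ℕ, ExtendsAlong ι A M)
    (hHom : ∀ (D : Type) [Fintype D] (A : Struc ↥E (fun R => ar ↑R) D)
      (f g : D ↪ ℕ), ExtendsAlong f A M → ExtendsAlong g A M →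
      ∃ e : ℕ ≃ ℕ, IsAutOf M e ∧ ∀ d : D, e (f d) = g d)
    (PM : Measure (ExpSpaceD L ar E ℕ M)) (hPM : IsProbabilityMeasure PM)
    (hExch : ∀ e : ℕ ≃ ℕ, IsAutOf M e →
      ∀ (n : ℕ) (ι : Fin n ↪ ℕ) (X : Struc L ar (Fin n)),
        PM (CylD M ι X) = PM (CylD M (ι.trans e.toEmbedding) X)) :
    ∃! F : ∀ (D : Type) [Countable D] (A : Struc ↥E (fun R => ar ↑R) D),
        Measure (ExpSpaceD L ar E D A),
      (∀ (D : Type) [Countable D] (A : Struc ↥E (fun R => ar ↑R) D),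
        IsProbabilityMeasure (F D A)) ∧
      F ℕ M = PM ∧
      (∀ (D' D : Type) [Countable D'] [Countable D] (ι : D' ↪ D)
        (A' : Struc ↥E (fun R => ar ↑R) D') (A : Struc ↥E (fun R => ar ↑R) D),
        ExtendsAlong ι A' A →
        ∀ (n : ℕ) (j : Fin n ↪ D') (X : Struc L ar (Fin n)),
          F D' A' (CylD A' j X) = F D A (CylD A (j.trans ι) X)) := by
  choose ι hι using hUniv
  have hProb (D : Type) [Countable D] (A : Struc ↥E (fun R => ar ↑R) D) :
      IsProbabilityMeasure (PM.map (ExpSpaceD.restrict (hι D A))) :=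
    Measure.isProbabilityMeasure_map (ExpSpaceD.measurable_restrict _).aemeasurable
  refine ⟨fun D _ A => PM.map (ExpSpaceD.restrict (hι D A)), ⟨hProb, ?_, ?_⟩, ?_⟩
  · refine measure_ext_of_cylD M fun n j X => ?_
    rw [ExpSpaceD.map_restrict_cylD]
    exact measure_cylD_eq_of_comap_eq hHom hExch ((hι ℕ M).comap_trans j) X
  · intro D' D _ _ κ A' A hκ n j X
    simp only [ExpSpaceD.map_restrict_cylD]
    refine measure_cylD_eq_of_comap_eq hHom hExch ?_ X
    rw [(hι D' A').comap_trans, (hι D A).comap_trans, hκ.comap_trans]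
  · rintro G ⟨hGProb, hGM, hGProj⟩
    funext D _ A
    refine measure_ext_of_cylD A fun n j X => ?_
    rw [hGProj D ℕ (ι D A) A M (hι D A) n j X, hGM, ExpSpaceD.map_restrict_cylD]
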